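/- Let R̂ > 0 and 0 < ξ < R̂ be real numbers, K > 0, and let F : ℂ → ℂ be an entire function such that for all k ∈ ℂ with |k| ≥ 1, |F(k) + R̂·cos(k(R̂−ξ)) + sin(k(R̂−ξ))/k| ≤ (K/|k|)·exp(|Im k|·(R̂−ξ)). Then F has exponential order one and type R̂−ξ; that is, writing M(r) := sup_{|k| = r} |F(k)|, one has limsup_{r→∞} (log log M(r))/(log r) = 1 and limsup_{r→∞} (log M(r))/r = R̂ − ξ. -/

import Mathlib

/-!
Write `a = R̂ - ξ` and `M(r)` for the maximum modulus. On `|k| = r` the bounds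
`|cos z|, |sin z| ≤ exp |Im z|` give `M(r) ≤ C exp(a r)`. On the imaginary axis, `k = i r`, the
principal part `R̂ cos(k a) + sin(k a) / k` is the real number `R̂ cosh(a r) + sinh(a r) / r`,
at least `R̂ exp(a r) / 2`, while the error is at most `(K / r) exp(a r)`; so `M(r) ≥ c exp(a r)`
for large `r`. Thus `log M(r) = a r + O(1)`, which gives type `a`, and then
`log log M(r) = log r + O(1)`, which gives order one.
-/

open Filter Topology

namespace Complex

lemma norm_exp_mul_I_le (z : ℂ) : ‖exp (z * I)‖ ≤ Real.exp |z.im| := by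
  rw [norm_exp]
  simpa using neg_le_abs z.im

lemma norm_exp_neg_mul_I_le (z : ℂ) : ‖exp (-z * I)‖ ≤ Real.exp |z.im| := by
  simpa using norm_exp_mul_I_le (-z)

lemma norm_cos_le_exp_abs_im (z : ℂ) : ‖cos z‖ ≤ Real.exp |z.im| := by
  have h := norm_add_le (exp (z * I)) (exp (-z * I))
  rw [cos, norm_div, Complex.norm_two, div_le_iff₀ two_pos]
  linarith [norm_exp_mul_I_le z, norm_exp_neg_mul_I_le z]

lemma norm_sin_le_exp_abs_im (z : ℂ) : ‖sin z‖ ≤ Real.exp |z.im| := by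
  have h := norm_sub_le (exp (-z * I)) (exp (z * I))
  rw [sin, norm_div, norm_mul, norm_I, mul_one, Complex.norm_two, div_le_iff₀ two_pos]
  linarith [norm_exp_mul_I_le z, norm_exp_neg_mul_I_le z]

end Complex

lemma tendsto_add_mul_div_atTop (c a : ℝ) :
    Tendsto (fun r : ℝ => (c + a * r) / r) atTop (𝓝 a) := by
  have h : Tendsto (fun r : ℝ => c / r + a) atTop (𝓝 (0 + a)) :=
    (tendsto_const_nhds.div_atTop tendsto_id).add tendsto_const_nhds
  rw [zero_add] at h
  refine h.congr' ?_
  filter_upwards [eventually_ne_atTop 0] with r hr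
  field_simp

lemma tendsto_div_atTop_of_sub_mul_bounded {g : ℝ → ℝ} {a c₁ c₂ : ℝ}
    (h : ∀ᶠ r in atTop, c₁ + a * r ≤ g r ∧ g r ≤ c₂ + a * r) :
    Tendsto (fun r => g r / r) atTop (𝓝 a) := by
  refine tendsto_of_tendsto_of_tendsto_of_le_of_le' (tendsto_add_mul_div_atTop c₁ a)
    (tendsto_add_mul_div_atTop c₂ a) ?_ ?_ <;>
  filter_upwards [h, eventually_ge_atTop 0] with r hr hr0
  exacts [div_le_div_of_nonneg_right hr.1 hr0, div_le_div_of_nonneg_right hr.2 hr0]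

lemma tendsto_log_div_log_of_tendsto_div {g : ℝ → ℝ} {a : ℝ} (ha : 0 < a)
    (h : Tendsto (fun r => g r / r) atTop (𝓝 a)) :
    Tendsto (fun r => Real.log (g r) / Real.log r) atTop (𝓝 1) := by
  have hlog : Tendsto (fun r => 1 + Real.log (g r / r) / Real.log r) atTop (𝓝 (1 + 0)) :=
    tendsto_const_nhds.add ((h.log ha.ne').div_atTop Real.tendsto_log_atTop)
  rw [add_zero] at hlog
  refine hlog.congr' ?_
  filter_upwards [h.eventually_ne ha.ne', eventually_gt_atTop 1] with r hg hr
  have hlogr : Real.log r ≠ 0 := (Real.log_pos hr).ne'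
  have hr0 : r ≠ 0 := by positivity
  rw [Real.log_div (div_ne_zero_iff.1 hg).1 hr0]
  field_simp
  ring

lemma tendsto_log_div_atTop_of_exp_bounds {M : ℝ → ℝ} {a c₁ c₂ : ℝ} (hc₁ : 0 < c₁)
    (hlo : ∀ᶠ r in atTop, c₁ * Real.exp (a * r) ≤ M r)
    (hhi : ∀ᶠ r in atTop, M r ≤ c₂ * Real.exp (a * r)) :
    Tendsto (fun r => Real.log (M r) / r) atTop (𝓝 a) := by
  refine tendsto_div_atTop_of_sub_mul_bounded (c₁ := Real.log c₁) (c₂ := Real.log c₂) ?_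
  filter_upwards [hlo, hhi] with r hl hh
  have hexp := Real.exp_pos (a * r)
  have hM : 0 < M r := lt_of_lt_of_le (by positivity) hl
  have hc₂ : 0 < c₂ := pos_of_mul_pos_left (hM.trans_le hh) hexp.le
  rw [← Real.log_exp (a * r), ← Real.log_mul hc₁.ne' hexp.ne', ← Real.log_mul hc₂.ne' hexp.ne']
  exact ⟨Real.log_le_log (by positivity) hl, Real.log_le_log hM hh⟩

noncomputable def maxModulus (F : ℂ → ℂ) (r : ℝ) : ℝ :=
  sSup ((fun k => ‖F k‖) '' Metric.sphere 0 r)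

lemma norm_le_maxModulus {F : ℂ → ℂ} (hF : Continuous F) {k : ℂ} :
    ‖F k‖ ≤ maxModulus F ‖k‖ :=
  le_csSup ((isCompact_sphere 0 ‖k‖).image hF.norm).bddAbove ⟨k, by simp, rfl⟩

lemma maxModulus_le {F : ℂ → ℂ} {r B : ℝ} (hr : 0 ≤ r) (h : ∀ k : ℂ, ‖k‖ = r → ‖F k‖ ≤ B) :
    maxModulus F r ≤ B := by
  refine csSup_le ((NormedSpace.sphere_nonempty.2 hr).image _) ?_
  rintro _ ⟨k, hk, rfl⟩
  exact h k (by simpa using hk)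

lemma mul_cos_add_sin_div_mul_I_eq_cosh_sinh (R a r : ℝ) :
    (R : ℂ) * Complex.cos (r * Complex.I * a) + Complex.sin (r * Complex.I * a) / (r * Complex.I)
      = ((R * Real.cosh (a * r) + Real.sinh (a * r) / r : ℝ) : ℂ) := by
  have harg : (r : ℂ) * Complex.I * a = ((a * r : ℝ) : ℂ) * Complex.I := by push_cast; ring
  rw [harg, Complex.cos_mul_I, Complex.sin_mul_I, mul_div_mul_right _ _ Complex.I_ne_zero]
  push_cast
  rfl

/-- The estimate (3.4), with `a = R̂ - ξ`. -/
def HasCosineAsymptotics (F : ℂ → ℂ) (R a K : ℝ) : Prop :=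
  ∀ k : ℂ, 1 ≤ ‖k‖ →
    ‖F k + R * Complex.cos (k * a) + Complex.sin (k * a) / k‖ ≤ K / ‖k‖ * Real.exp (|k.im| * a)

namespace HasCosineAsymptotics

variable {F : ℂ → ℂ} {R a K : ℝ}

lemma norm_le (h : HasCosineAsymptotics F R a K) (ha : 0 ≤ a) {k : ℂ} (hk : 1 ≤ ‖k‖) :
    ‖F k‖ ≤ (|R| + 1 + |K|) * Real.exp (a * ‖k‖) := by
  set E := Real.exp (a * ‖k‖)
  have him : |k.im| * a ≤ a * ‖k‖ := by
    rw [mul_comm]; exact mul_le_mul_of_nonneg_left k.abs_im_le_norm ha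
  have hexp : Real.exp |(k * a).im| ≤ E := by
    refine Real.exp_le_exp.2 ?_
    simpa [abs_mul, abs_of_nonneg ha] using him
  have hcos : ‖R * Complex.cos (k * a)‖ ≤ |R| * E := by
    rw [norm_mul, Complex.norm_real, Real.norm_eq_abs]
    gcongr; exact (Complex.norm_cos_le_exp_abs_im _).trans hexp
  have hsin : ‖Complex.sin (k * a) / k‖ ≤ E := by
    rw [norm_div]
    exact (div_le_self (norm_nonneg _) hk).trans ((Complex.norm_sin_le_exp_abs_im _).trans hexp)
  have hrem : K / ‖k‖ * Real.exp (|k.im| * a) ≤ |K| * E := by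
    refine mul_le_mul ?_ (Real.exp_le_exp.2 him) (Real.exp_pos _).le (abs_nonneg K)
    exact (div_le_div_of_nonneg_right (le_abs_self K) (norm_nonneg k)).trans
      (div_le_self (abs_nonneg K) hk)
  calc ‖F k‖
      = ‖(F k + R * Complex.cos (k * a) + Complex.sin (k * a) / k)
          - (R * Complex.cos (k * a) + Complex.sin (k * a) / k)‖ := by ring_nf
    _ ≤ ‖F k + R * Complex.cos (k * a) + Complex.sin (k * a) / k‖
          + (‖R * Complex.cos (k * a)‖ + ‖Complex.sin (k * a) / k‖) :=
        (norm_sub_le _ _).trans (by gcongr; exact norm_add_le _ _)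
    _ ≤ |K| * E + (|R| * E + E) := by gcongr; exact (h k hk).trans hrem
    _ = (|R| + 1 + |K|) * E := by ring

lemma le_norm_mul_I (h : HasCosineAsymptotics F R a K) (hR : 0 < R) (ha : 0 ≤ a) {r : ℝ}
    (hr : 1 ≤ r) (hrK : 4 * K / R ≤ r) :
    R / 4 * Real.exp (a * r) ≤ ‖F (r * Complex.I)‖ := by
  have hr0 : 0 < r := one_pos.trans_le hr
  have hk : ‖(r : ℂ) * Complex.I‖ = r := by simp [abs_of_pos hr0]
  set P := (R : ℂ) * Complex.cos (r * Complex.I * a)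
    + Complex.sin (r * Complex.I * a) / (r * Complex.I)
  have hP : R / 2 * Real.exp (a * r) ≤ ‖P‖ := by
    have hsinh : 0 ≤ Real.sinh (a * r) / r := by
      have : 0 ≤ Real.sinh (a * r) := Real.sinh_nonneg_iff.2 (by positivity)
      positivity
    have hcosh : Real.exp (a * r) / 2 ≤ Real.cosh (a * r) := by
      rw [Real.cosh_eq]; linarith [Real.exp_pos (-(a * r))]
    rw [show P = _ from mul_cos_add_sin_div_mul_I_eq_cosh_sinh R a r, Complex.norm_real, Real.norm_eq_abs]
    calc R / 2 * Real.exp (a * r) ≤ R * Real.cosh (a * r) := by nlinarith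
      _ ≤ _ := by rw [abs_of_nonneg (by positivity)]; linarith
  have hrem : ‖F (r * Complex.I) + P‖ ≤ R / 4 * Real.exp (a * r) := by
    have hKr : K / r ≤ R / 4 := by
      rw [div_le_iff₀ hR] at hrK
      rw [div_le_iff₀ hr0]; linarith
    have him : ((r : ℂ) * Complex.I).im = r := by simp
    have := h (r * Complex.I) (by rw [hk]; exact hr)
    rw [hk, him, abs_of_pos hr0, mul_comm r a, add_assoc] at this
    exact this.trans (by gcongr)
  have := norm_sub_le (F (r * Complex.I) + P) (F (r * Complex.I))
  rw [add_sub_cancel_left] at this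
  linarith

lemma maxModulus_le (h : HasCosineAsymptotics F R a K) (ha : 0 ≤ a) {r : ℝ} (hr : 1 ≤ r) :
    maxModulus F r ≤ (|R| + 1 + |K|) * Real.exp (a * r) :=
  _root_.maxModulus_le (zero_le_one.trans hr) fun k hk => by subst hk; exact h.norm_le ha hr

lemma le_maxModulus (h : HasCosineAsymptotics F R a K) (hF : Continuous F) (hR : 0 < R)
    (ha : 0 ≤ a) {r : ℝ} (hr : 1 ≤ r) (hrK : 4 * K / R ≤ r) :
    R / 4 * Real.exp (a * r) ≤ maxModulus F r := by
  have hk : ‖(r : ℂ) * Complex.I‖ = r := by simp [abs_of_pos (one_pos.trans_le hr)]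
  have hmax := norm_le_maxModulus hF (k := r * Complex.I)
  rw [hk] at hmax
  exact (h.le_norm_mul_I hR ha hr hrK).trans hmax

end HasCosineAsymptotics

theorem order_one_type_R_sub_xi_general
    (Rhat ξ K : ℝ) (hR : 0 < Rhat) (hξR : ξ < Rhat)
    (F : ℂ → ℂ) (hF : Differentiable ℂ F)
    (hasym : ∀ k : ℂ, 1 ≤ ‖k‖ →
      ‖F k + (Rhat : ℂ) * Complex.cos (k * (Rhat - ξ)) + Complex.sin (k * (Rhat - ξ)) / k‖
        ≤ (K / ‖k‖) * Real.exp (|k.im| * (Rhat - ξ))) :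
    (limsup (fun r : ℝ =>
        Real.log (Real.log (sSup ((fun k => ‖F k‖) '' Metric.sphere (0 : ℂ) r)))
          / Real.log r) atTop = 1) ∧
    (limsup (fun r : ℝ =>
        Real.log (sSup ((fun k => ‖F k‖) '' Metric.sphere (0 : ℂ) r)) / r) atTop
      = Rhat - ξ) := by
  have h : HasCosineAsymptotics F Rhat (Rhat - ξ) K := by
    simpa only [HasCosineAsymptotics, Complex.ofReal_sub] using hasym
  have ha : 0 < Rhat - ξ := sub_pos.2 hξR
  have htype : Tendsto (fun r => Real.log (maxModulus F r) / r) atTop (𝓝 (Rhat - ξ)) :=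
    tendsto_log_div_atTop_of_exp_bounds (by positivity : 0 < Rhat / 4)
      ((eventually_ge_atTop (max 1 (4 * K / Rhat))).mono fun r hr =>
        h.le_maxModulus hF.continuous hR ha.le (le_of_max_le_left hr) (le_of_max_le_right hr))
      ((eventually_ge_atTop 1).mono fun r hr => h.maxModulus_le ha.le hr)
  exact ⟨(tendsto_log_div_log_of_tendsto_div ha htype).limsup_eq, htype.limsup_eq⟩

/-- **Lemma 3.2.** An entire function `F` satisfying the asymptotic estimate (3.4),
`|F(k) + Rhat cos(k(Rhat−ξ)) + sin(k(Rhat−ξ))/k| ≤ (K/|k|) exp(|Im k|(Rhat−ξ))` for `|k| ≥ 1`,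
has exponential order one and type `Rhat − ξ`. -/
theorem order_one_type_R_sub_xi
    (Rhat ξ K : ℝ) (hR : 0 < Rhat) (hξ0 : 0 < ξ) (hξR : ξ < Rhat) (hK : 0 < K)
    (F : ℂ → ℂ) (hF : Differentiable ℂ F)
    (hasym : ∀ k : ℂ, 1 ≤ ‖k‖ →
      ‖F k + (Rhat : ℂ) * Complex.cos (k * (Rhat - ξ)) + Complex.sin (k * (Rhat - ξ)) / k‖
        ≤ (K / ‖k‖) * Real.exp (|k.im| * (Rhat - ξ))) :
    (limsup (fun r : ℝ =>
        Real.log (Real.log (sSup ((fun k => ‖F k‖) '' Metric.sphere (0 : ℂ) r)))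
          / Real.log r) atTop = 1) ∧
    (limsup (fun r : ℝ =>
        Real.log (sSup ((fun k => ‖F k‖) '' Metric.sphere (0 : ℂ) r)) / r) atTop
      = Rhat - ξ) :=
  order_one_type_R_sub_xi_general Rhat ξ K hR hξR F hF hasym
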